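/- arXiv:1910.08917 — 2 statements merged into one kernel-verified Lean document; each statement's English description precedes it below -/
import Mathlib

section
/- Let (X,d) be a metric space, ε > 0, and let w, w' ∈ X. Suppose μ is a measure on X and C ⊆ X is measurable with 0 < ∫_C exp(-ε·d(z,w')) dμ(z) < ∞. Then (∫_C exp(-ε·d(z,w)) dμ(z)) / (∫_C exp(-ε·d(z,w')) dμ(z)) ≤ exp(ε·d(w,w')). -/
open MeasureTheory

theorem integral_ratio_privacy_bound {X : Type*} [MetricSpace X]
    [MeasurableSpace X] [OpensMeasurableSpace X]
    (μ : Measure X) (ε : ℝ) (hε : 0 < ε) (w w' : X)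
    (C : Set X) (hC : MeasurableSet C)
    (hint : IntegrableOn (fun z => Real.exp (-ε * dist z w')) C μ)
    (hpos : 0 < ∫ z in C, Real.exp (-ε * dist z w') ∂μ) :
    (∫ z in C, Real.exp (-ε * dist z w) ∂μ) /
      (∫ z in C, Real.exp (-ε * dist z w') ∂μ) ≤ Real.exp (ε * dist w w') := by
  rw [div_le_iff₀ hpos]
  have key : ∀ z, Real.exp (-ε * dist z w) ≤
      Real.exp (ε * dist w w') * Real.exp (-ε * dist z w') := by
    intro z
    rw [← Real.exp_add]
    apply Real.exp_le_exp.mpr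
    have := dist_triangle z w w'
    have hd : dist w' w = dist w w' := dist_comm _ _
    nlinarith [hε.le]
  calc (∫ z in C, Real.exp (-ε * dist z w) ∂μ)
      ≤ ∫ z in C, Real.exp (ε * dist w w') * Real.exp (-ε * dist z w') ∂μ := by
        apply integral_mono_of_nonneg
        · filter_upwards with z using (Real.exp_pos _).le
        · exact hint.const_mul _
        · filter_upwards with z using key z
    _ = Real.exp (ε * dist w w') * ∫ z in C, Real.exp (-ε * dist z w') ∂μ := by
        rw [integral_const_mul]
end

section
/- For ε > 0, the one-dimensional integral ∫_{-1}^{1} ((1+|x|)/(1-|x|))^{-ε} dx equals 2·₂F₁(1, ε; 2+ε; -1)/(1+ε), where ₂F₁ is the Gauss hypergeometric function. -/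
/-!
Both sides equal `2ε · J` with `J = ∫₀¹ t^(ε-1) (1-t)/(1+t) dt`.

Hypergeometric side: `(1)ₙ (ε)ₙ / ((2+ε)ₙ n!) = ε(1+ε) / ((ε+n)(ε+n+1))`, and
`1/(s(s+1)) = ∫₀¹ t^(s-1) (1-t) dt`; summing the geometric series under the integral
(dominated convergence) gives Euler's representation
`₂F₁(1, ε; 2+ε; z) = ε(1+ε) ∫₀¹ t^(ε-1) (1-t)/(1-zt) dt` for `|z| ≤ 1`.

Integral side: since `((1+x)/(1-x))^(-ε) = ((1-x)/(1+x))^ε`, evenness and the involution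
`x ↦ (1-x)/(1+x)` of `[0, 1]` turn the integral into `4 ∫₀¹ t^ε/(1+t)² dt`, and since
`(1-t)/(1+t)` has derivative `-2/(1+t)²`, integrating `t^ε (1-t)/(1+t)` by parts gives `2εJ`.
-/

open scoped BigOperators

/-- Pochhammer symbol (rising factorial) for a real argument. -/
noncomputable def poch (q : ℝ) (n : ℕ) : ℝ := ∏ i ∈ Finset.range n, (q + i)

/-- Gauss hypergeometric function ₂F₁ as a power series. -/
noncomputable def gaussHyp (a b c z : ℝ) : ℝ :=
  ∑' n : ℕ, poch a n * poch b n / poch c n * z ^ n / (Nat.factorial n)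

open MeasureTheory intervalIntegral Set Filter
open scoped Interval

lemma poch_succ_right (q : ℝ) (n : ℕ) : poch q (n + 1) = poch q n * (q + n) := by
  simp [poch, Finset.prod_range_succ]

lemma poch_succ_left (q : ℝ) (n : ℕ) : poch q (n + 1) = q * poch (q + 1) n := by
  simp only [poch, Finset.prod_range_succ', Nat.cast_add, Nat.cast_one, Nat.cast_zero, add_zero]
  rw [mul_comm]
  congr 1
  exact Finset.prod_congr rfl fun i _ => by ring

lemma poch_one (n : ℕ) : poch 1 n = n.factorial := by
  induction n with
  | zero => simp [poch]
  | succ n ih => rw [poch_succ_right, ih]; push_cast [Nat.factorial_succ]; ring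

lemma poch_pos {q : ℝ} (hq : 0 < q) (n : ℕ) : 0 < poch q n :=
  Finset.prod_pos fun _ _ => by positivity

lemma poch_div_poch_two_add {q : ℝ} (hq : 0 < q) (n : ℕ) :
    poch q n / poch (2 + q) n = q * (1 + q) / ((q + n) * (q + n + 1)) := by
  -- expand `poch q (n + 2)` from both ends
  have h := (poch_succ_right q (n + 1)).symm.trans (poch_succ_left q (n + 1))
  rw [poch_succ_right, poch_succ_left (q + 1), show q + 1 + 1 = 2 + q by ring] at h
  push_cast at h
  rw [div_eq_div_iff (poch_pos (by linarith) n).ne' (by positivity)]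
  linear_combination h

lemma gaussHyp_one_two_add_eq_tsum {q : ℝ} (hq : 0 < q) (z : ℝ) :
    gaussHyp 1 q (2 + q) z = q * (1 + q) * ∑' n : ℕ, z ^ n / ((q + n) * (q + n + 1)) := by
  rw [gaussHyp, ← tsum_mul_left]
  refine tsum_congr fun n => ?_
  have : (n.factorial : ℝ) ≠ 0 := by positivity
  rw [poch_one, mul_div_assoc _ (poch q n), poch_div_poch_two_add hq]
  field_simp

lemma integral_rpow_sub_one_mul_one_sub {s : ℝ} (hs : 0 < s) :
    ∫ t in (0 : ℝ)..1, t ^ (s - 1) * (1 - t) = 1 / (s * (s + 1)) := by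
  have h : EqOn (fun t : ℝ => t ^ (s - 1) * (1 - t)) (fun t => t ^ (s - 1) - t ^ (s - 1 + 1))
      (uIcc 0 1) := fun t ht => by
    rw [uIcc_of_le zero_le_one] at ht
    simp only [Real.rpow_add_one' ht.1 (by linarith : s - 1 + 1 ≠ 0)]
    ring
  rw [integral_congr h, integral_sub (intervalIntegrable_rpow' (by linarith))
    (intervalIntegrable_rpow' (by linarith)), integral_rpow (Or.inl (by linarith)),
    integral_rpow (Or.inl (by linarith))]
  simp only [sub_add_cancel, Real.one_rpow, Real.zero_rpow hs.ne',
    Real.zero_rpow (by linarith : s + 1 ≠ 0)]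
  field_simp
  ring

lemma integral_pow_mul_rpow_sub_one_mul_one_sub {q : ℝ} (hq : 0 < q) (z : ℝ) (n : ℕ) :
    ∫ t in (0 : ℝ)..1, (z * t) ^ n * (t ^ (q - 1) * (1 - t))
      = z ^ n / ((q + n) * (q + n + 1)) := by
  rw [div_eq_mul_one_div, ← integral_rpow_sub_one_mul_one_sub (by positivity),
    ← intervalIntegral.integral_const_mul]
  refine integral_congr_uIoo fun t ht => ?_
  rw [uIoo_of_le zero_le_one] at ht
  rw [show q + n - 1 = q - 1 + n by ring, Real.rpow_add_natCast ht.1.ne']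
  ring

theorem hasSum_integral_rpow_mul_one_sub_div {q z : ℝ} (hq : 0 < q) (hz : |z| ≤ 1) :
    HasSum (fun n : ℕ => z ^ n / ((q + n) * (q + n + 1)))
      (∫ t in (0 : ℝ)..1, t ^ (q - 1) * (1 - t) / (1 - z * t)) := by
  set w : ℝ → ℝ := fun t => t ^ (q - 1) * (1 - t) with hw
  have hw_nonneg : ∀ t ∈ Ι (0 : ℝ) 1, 0 ≤ w t := fun t ht => by
    rw [uIoc_of_le zero_le_one] at ht
    exact mul_nonneg (Real.rpow_nonneg ht.1.le _) (by linarith [ht.2])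
  have hsum := intervalIntegral.hasSum_integral_of_dominated_convergence (μ := volume)
    (F := fun n t => (z * t) ^ n * w t) (f := fun t => t ^ (q - 1) * (1 - t) / (1 - z * t))
    (fun n t => t ^ n * w t) (fun n => by fun_prop)
    (fun n => Eventually.of_forall fun t ht => by
      have hwt := hw_nonneg t ht
      rw [uIoc_of_le zero_le_one] at ht
      rw [norm_mul, norm_pow, Real.norm_of_nonneg hwt, norm_mul, mul_pow, Real.norm_eq_abs,
        Real.norm_of_nonneg ht.1.le]
      gcongr
      exact mul_le_of_le_one_left (pow_nonneg ht.1.le n) (pow_le_one₀ (abs_nonneg z) hz))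
    (by
      filter_upwards [volume.ae_ne 1] with t hne ht
      rw [uIoc_of_le zero_le_one] at ht
      exact (summable_geometric_of_lt_one ht.1.le (ht.2.lt_of_ne hne)).mul_right (w t))
    ((intervalIntegrable_rpow' (by linarith : -1 < q - 1)).congr_uIoo fun t ht => by
      rw [uIoo_of_le zero_le_one] at ht
      rw [tsum_mul_right, tsum_geometric_of_lt_one ht.1.le ht.2, hw]
      field_simp [(sub_pos.2 ht.2).ne'])
    (by
      filter_upwards [volume.ae_ne 1] with t hne ht
      rw [uIoc_of_le zero_le_one] at ht
      have hzt : |z * t| < 1 := by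
        rw [abs_mul, abs_of_pos ht.1]
        exact (mul_le_of_le_one_left ht.1.le hz).trans_lt (ht.2.lt_of_ne hne)
      simpa only [inv_mul_eq_div] using (hasSum_geometric_of_abs_lt_one hzt).mul_right (w t))
  simpa only [hw, integral_pow_mul_rpow_sub_one_mul_one_sub hq] using hsum

theorem gaussHyp_one_two_add_eq_integral {q z : ℝ} (hq : 0 < q) (hz : |z| ≤ 1) :
    gaussHyp 1 q (2 + q) z
      = q * (1 + q) * ∫ t in (0 : ℝ)..1, t ^ (q - 1) * (1 - t) / (1 - z * t) := by
  rw [gaussHyp_one_two_add_eq_tsum hq, (hasSum_integral_rpow_mul_one_sub_div hq hz).tsum_eq]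

lemma hasDerivAt_one_sub_div_one_add {x : ℝ} (hx : 1 + x ≠ 0) :
    HasDerivAt (fun x : ℝ => (1 - x) / (1 + x)) (-2 / (1 + x) ^ 2) x :=
  (((hasDerivAt_id' x).const_sub 1).fun_div ((hasDerivAt_id' x).const_add 1) hx).congr_deriv
    (by ring)

lemma one_sub_div_one_add_involutive {x : ℝ} (hx : 1 + x ≠ 0) :
    (1 - (1 - x) / (1 + x)) / (1 + (1 - x) / (1 + x)) = x := by
  field_simp
  ring

theorem integral_comp_one_sub_div_one_add (g : ℝ → ℝ) :
    ∫ x in (0 : ℝ)..1, g ((1 - x) / (1 + x))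
      = ∫ t in (0 : ℝ)..1, g t * (2 / (1 + t) ^ 2) := by
  have hpos : ∀ x ∈ uIcc (0 : ℝ) 1, 1 + x ≠ 0 := fun x hx => by
    rw [uIcc_of_le zero_le_one] at hx
    linarith [hx.1]
  -- substitute `u = f x` in `∫ (g ∘ f) (f x) * f' x dx`, using `f ∘ f = id` on `[0, 1]`
  have hsubst := integral_comp_mul_deriv_of_deriv_nonpos (a := 0) (b := 1)
    (g := fun u => g ((1 - u) / (1 + u)))
    (fun x hx => (hasDerivAt_one_sub_div_one_add (hpos x hx)).continuousAt.continuousWithinAt)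
    (fun x hx => hasDerivAt_one_sub_div_one_add (hpos x (Ioo_subset_Icc_self hx)))
    (fun x _ => div_nonpos_of_nonpos_of_nonneg (by norm_num) (sq_nonneg _))
  have hinvol : EqOn (fun x => ((fun u => g ((1 - u) / (1 + u))) ∘ fun x => (1 - x) / (1 + x)) x
      * (-2 / (1 + x) ^ 2)) (fun t => -(g t * (2 / (1 + t) ^ 2))) (uIcc 0 1) := fun x hx => by
    simp only [Function.comp_apply, one_sub_div_one_add_involutive (hpos x hx)]
    ring
  norm_num only [integral_symm 0 1, integral_congr hinvol, intervalIntegral.integral_neg] at hsubst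
  linarith

theorem integral_rpow_mul_two_div_one_add_sq {q : ℝ} (hq : 0 < q) :
    ∫ t in (0 : ℝ)..1, t ^ q * (2 / (1 + t) ^ 2)
      = q * ∫ t in (0 : ℝ)..1, t ^ (q - 1) * (1 - t) / (1 + t) := by
  have hpos : ∀ t ∈ Icc (0 : ℝ) 1, 1 + t ≠ 0 := fun t ht => by linarith [ht.1]
  have hcont : ContinuousOn (fun t : ℝ => (1 - t) / (1 + t)) (Icc 0 1) := fun t ht =>
    (hasDerivAt_one_sub_div_one_add (hpos t ht)).continuousAt.continuousWithinAt
  have hcont' : ContinuousOn (fun t : ℝ => 2 / (1 + t) ^ 2) (Icc 0 1) := fun t ht =>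
    (continuousAt_const.div ((continuousAt_const.add continuousAt_id).pow 2)
      (pow_ne_zero 2 (hpos t ht))).continuousWithinAt
  rw [← uIcc_of_le zero_le_one] at hcont hcont'
  have hint₁ :
      IntervalIntegrable (fun t : ℝ => t ^ (q - 1) * (1 - t) / (1 + t)) volume 0 1 := by
    simpa only [mul_div_assoc] using
      (intervalIntegrable_rpow' (by linarith : -1 < q - 1)).mul_continuousOn hcont
  have hint₂ : IntervalIntegrable (fun t : ℝ => t ^ q * (2 / (1 + t) ^ 2)) volume 0 1 :=
    (intervalIntegrable_rpow' (by linarith : -1 < q)).mul_continuousOn hcont'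
  have hderiv : ∀ t ∈ Ioo (0 : ℝ) 1, HasDerivAt (fun t => t ^ q * ((1 - t) / (1 + t)))
      (q * (t ^ (q - 1) * (1 - t) / (1 + t)) - t ^ q * (2 / (1 + t) ^ 2)) t := fun t ht =>
    ((Real.hasDerivAt_rpow_const (Or.inl ht.1.ne')).mul
      (hasDerivAt_one_sub_div_one_add (hpos t (Ioo_subset_Icc_self ht)))).congr_deriv (by ring)
  have hftc := integral_eq_sub_of_hasDerivAt_of_le zero_le_one
    (((Real.continuous_rpow_const hq.le).continuousOn.mul hcont).mono (uIcc_of_le zero_le_one).ge)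
    hderiv ((hint₁.const_mul q).sub hint₂)
  rw [integral_sub (hint₁.const_mul q) hint₂, intervalIntegral.integral_const_mul] at hftc
  norm_num [Real.zero_rpow hq.ne'] at hftc
  linarith

theorem integral_comp_abs_of_nonneg {g : ℝ → ℝ} {a : ℝ} (ha : 0 ≤ a)
    (hg : IntervalIntegrable g volume 0 a) :
    ∫ x in -a..a, g |x| = 2 * ∫ x in (0 : ℝ)..a, g x := by
  have habs : EqOn (fun x => g |x|) g (uIcc 0 a) := fun x hx => by
    rw [uIcc_of_le ha] at hx
    simp only [abs_of_nonneg hx.1]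
  have hint : IntervalIntegrable (fun x => g |x|) volume 0 a :=
    (intervalIntegrable_congr fun x hx => (habs (uIoc_subset_uIcc hx)).symm).mp hg
  have hneg : ∫ x in -a..0, g |x| = ∫ x in (0 : ℝ)..a, g |x| := by
    simpa only [abs_neg, neg_zero] using
      (integral_comp_neg (fun x => g |x|) (a := 0) (b := a)).symm
  have hint' : IntervalIntegrable (fun x => g |x|) volume (-a) 0 := by
    simpa only [abs_neg, neg_zero] using
      ((IntervalIntegrable.iff_comp_neg (f := fun x => g |x|)).mp hint).symm
  rw [← integral_add_adjacent_intervals hint' hint, hneg, integral_congr habs]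
  ring

lemma one_add_div_one_sub_rpow_neg {x : ℝ} (q : ℝ) (hx₀ : 0 ≤ x) (hx₁ : x ≤ 1) :
    ((1 + x) / (1 - x)) ^ (-q) = ((1 - x) / (1 + x)) ^ q := by
  rw [Real.rpow_neg (div_nonneg (by linarith) (by linarith)), ← Real.inv_rpow
    (div_nonneg (by linarith) (by linarith)), inv_div]

theorem normalization_constant_hypergeometric (ε : ℝ) (hε : 0 < ε) :
    (∫ x in (-1 : ℝ)..1, ((1 + |x|) / (1 - |x|)) ^ (-ε))
      = 2 * gaussHyp 1 ε (2 + ε) (-1) / (1 + ε) := by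
  have hcont : ContinuousOn (fun x : ℝ => ((1 - x) / (1 + x)) ^ ε) (uIcc 0 1) :=
    fun x hx => by
      rw [uIcc_of_le zero_le_one] at hx
      have := hx.1
      exact ((hasDerivAt_one_sub_div_one_add (by positivity)).continuousAt.rpow_const
        (Or.inr hε.le)).continuousWithinAt
  calc (∫ x in (-1 : ℝ)..1, ((1 + |x|) / (1 - |x|)) ^ (-ε))
      = ∫ x in (-1 : ℝ)..1, ((1 - |x|) / (1 + |x|)) ^ ε := integral_congr fun x hx => by
        rw [uIcc_of_le (by norm_num)] at hx
        exact one_add_div_one_sub_rpow_neg ε (abs_nonneg x) (abs_le.2 hx)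
    _ = 2 * (ε * ∫ t in (0 : ℝ)..1, t ^ (ε - 1) * (1 - t) / (1 + t)) := by
      rw [integral_comp_abs_of_nonneg zero_le_one hcont.intervalIntegrable,
        integral_comp_one_sub_div_one_add (· ^ ε), integral_rpow_mul_two_div_one_add_sq hε]
    _ = 2 * gaussHyp 1 ε (2 + ε) (-1) / (1 + ε) := by
      rw [gaussHyp_one_two_add_eq_integral hε (by norm_num)]
      simp only [neg_one_mul, sub_neg_eq_add]
      field_simp
end
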